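/- Let E be a Krull–Schmidt exact category with enough projectives P and let T be a τ-rigid subcategory of E satisfying condition (A). For each Q ∈ P fix an exact sequence Q →f T' ↠ C with f a minimal left T-approximation, and set ρ(Q) = Im f; for a morphism a: Q → Q', define ρ(a) as the induced morphism Im f → Im f'. Then ρ: P → P_T is a well-defined additive functor which kills the ideal I and induces an equivalence of categories ρ̄: P̄ = P/I → P_T. -/

import Mathlib

/-!
Let `Q ↠ K Q ↣ T₀ Q` be a left `T`-approximation of `Q` factored through its image. A morphism
`a : Q ⟶ Q'` induces a unique `ρ(a) : K Q ⟶ K Q'` with `d Q ≫ ρ(a) = a ≫ d Q'`: factor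
`a ≫ d Q' ≫ i Q'` through the approximation of `Q`, then lift through the kernel `i Q'`;
uniqueness holds because `d Q` is epi. Comparing two approximations of the same `Q` both ways
shows that the image does not depend on the approximation. Uniqueness makes `ρ` an additive
functor, it is full because `Q` is projective, and `ρ(a) = 0` iff `a` kills the approximation,
i.e. every map to `T`.

An object `X` of `P_T` is a summand of `ρ(⨁ Qⱼ)`. By Krull–Schmidt, `⨁ Qⱼ ≅ ⨁ Zₗ` and
`X ≅ ⨁ Yₖ` with local endomorphism rings. Since some term of a decomposition of `1` in a local
ring is a unit, each `Yₖ` is a summand of a single `ρ(Zₗ)`; and `End ρ(Zₗ)` is a quotient of the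
local ring `End Zₗ`, so its idempotents are trivial and `Yₖ ≅ ρ(Zₗ)`. Hence `X ≅ ρ(⨁ Z_{l(k)})`.
-/

open CategoryTheory CategoryTheory.Limits ZeroObject

namespace TauTilting

universe w v u

/-- A class of "conflations" (kernel–cokernel pairs) on an additive category,
the datum underlying an exact structure in the sense of Quillen. -/
structure ConflationStruct (C : Type u) [Category.{v} C] [Preadditive C] where
  /-- `IsConflation f g` means that `X ↣ Y ↠ Z` given by `f, g` is a conflation. -/
  IsConflation : ∀ ⦃X Y Z : C⦄, (X ⟶ Y) → (Y ⟶ Z) → Prop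

namespace ConflationStruct

variable {C : Type u} [Category.{v} C] [Preadditive C] (S : ConflationStruct C)

/-- A morphism is an inflation if it occurs as the first map of a conflation. -/
def IsInflation {X Y : C} (f : X ⟶ Y) : Prop :=
  ∃ (Z : C) (g : Y ⟶ Z), S.IsConflation f g

/-- A morphism is a deflation if it occurs as the second map of a conflation. -/
def IsDeflation {Y Z : C} (g : Y ⟶ Z) : Prop :=
  ∃ (X : C) (f : X ⟶ Y), S.IsConflation f g

/-- Quillen's axioms for an exact structure: conflations are kernel-cokernel pairs,
the class of conflations is closed under isomorphisms, identities are inflations and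
deflations, inflations and deflations are closed under composition, pushouts of
inflations along arbitrary morphisms exist and are inflations, and dually. -/
structure IsExactStructure : Prop where
  ker_coker : ∀ {X Y Z : C} {f : X ⟶ Y} {g : Y ⟶ Z}, S.IsConflation f g →
    ∃ w : f ≫ g = 0, Nonempty (IsLimit (KernelFork.ofι f w)) ∧
      Nonempty (IsColimit (CokernelCofork.ofπ g w))
  iso_closed : ∀ {X X' Y Y' Z Z' : C} (eX : X' ≅ X) (eY : Y' ≅ Y) (eZ : Z' ≅ Z)
    {f : X ⟶ Y} {g : Y ⟶ Z}, S.IsConflation f g →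
    S.IsConflation (eX.hom ≫ f ≫ eY.inv) (eY.hom ≫ g ≫ eZ.inv)
  id_inflation : ∀ X : C, S.IsInflation (𝟙 X)
  id_deflation : ∀ X : C, S.IsDeflation (𝟙 X)
  inflation_comp : ∀ {X Y Z : C} {f : X ⟶ Y} {g : Y ⟶ Z},
    S.IsInflation f → S.IsInflation g → S.IsInflation (f ≫ g)
  deflation_comp : ∀ {X Y Z : C} {f : X ⟶ Y} {g : Y ⟶ Z},
    S.IsDeflation f → S.IsDeflation g → S.IsDeflation (f ≫ g)
  pushout_inflation : ∀ {X Y Z : C} (f : X ⟶ Y) (h : X ⟶ Z), S.IsInflation f →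
    ∃ (W : C) (h' : Y ⟶ W) (f' : Z ⟶ W), IsPushout f h h' f' ∧ S.IsInflation f'
  pullback_deflation : ∀ {X Y Z : C} (g : X ⟶ Z) (h : Y ⟶ Z), S.IsDeflation g →
    ∃ (W : C) (h' : W ⟶ X) (g' : W ⟶ Y), IsPullback h' g' g h ∧ S.IsDeflation g'

/-- An object `P` is projective relative to the exact structure: `Hom(P,-)` sends
conflations to short exact sequences, equivalently morphisms out of `P` lift along
deflations. -/
def IsProjObj (P : C) : Prop :=
  ∀ ⦃Y Z : C⦄ (g : Y ⟶ Z), S.IsDeflation g → ∀ u : P ⟶ Z, ∃ v : P ⟶ Y, v ≫ g = u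

/-- The class of projective objects. -/
def projClass : Set C := {P | S.IsProjObj P}

/-- The exact category has enough projectives. -/
def HasEnoughProjectives : Prop :=
  ∀ X : C, ∃ (P : C) (p : P ⟶ X), S.IsProjObj P ∧ S.IsDeflation p

/-- `Fac T` : objects admitting a deflation from an object of `T`. -/
def Fac (T : Set C) : Set C :=
  {X | ∃ (T' : C) (g : T' ⟶ X), T' ∈ T ∧ S.IsDeflation g}

/-- `Sub T` : objects admitting an inflation into an object of `T`. -/
def Sub (T : Set C) : Set C :=
  {X | ∃ (T' : C) (f : X ⟶ T'), T' ∈ T ∧ S.IsInflation f}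

/-- `Ext¹(X, Y) = 0`, expressed by the splitting of all conflations `Y ↣ E ↠ X`. -/
def ext1Zero (X Y : C) : Prop :=
  ∀ (E : C) (f : Y ⟶ E) (g : E ⟶ X), S.IsConflation f g → ∃ s : X ⟶ E, s ≫ g = 𝟙 X

/-- A morphism is admissible if it factors as a deflation followed by an inflation. -/
def IsAdmissible {X Y : C} (f : X ⟶ Y) : Prop :=
  ∃ (K : C) (d : X ⟶ K) (i : K ⟶ Y), S.IsDeflation d ∧ S.IsInflation i ∧ d ≫ i = f

end ConflationStruct

section Approx

variable {C : Type u} [Category.{v} C]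

/-- `f : P ⟶ X` is a left `T`-approximation. -/
def LeftApprox (T : Set C) {P X : C} (f : P ⟶ X) : Prop :=
  X ∈ T ∧ ∀ (T' : C), T' ∈ T → ∀ u : P ⟶ T', ∃ v : X ⟶ T', f ≫ v = u

/-- `f : X ⟶ M` is a right `T`-approximation. -/
def RightApprox (T : Set C) {X M : C} (f : X ⟶ M) : Prop :=
  X ∈ T ∧ ∀ (T' : C), T' ∈ T → ∀ u : T' ⟶ M, ∃ v : T' ⟶ X, v ≫ f = u

/-- A class of objects closed under direct summands. -/
def SummandClosed (T : Set C) : Prop :=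
  ∀ {X Z : C}, Z ∈ T → ∀ (i : X ⟶ Z) (r : Z ⟶ X), i ≫ r = 𝟙 X → X ∈ T

end Approx

section Additive

variable {C : Type u} [Category.{v} C] [Preadditive C] [HasZeroObject C] [HasBinaryBiproducts C]

/-- An additively closed subcategory: closed under isomorphisms, finite direct sums
and direct summands. -/
structure AdditivelyClosed (T : Set C) : Prop where
  mem_of_iso : ∀ {X Y : C}, (X ≅ Y) → X ∈ T → Y ∈ T
  zero_mem : (0 : C) ∈ T
  biprod_mem : ∀ {X Y : C}, X ∈ T → Y ∈ T → (X ⊞ Y) ∈ T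
  summand_mem : SummandClosed T

/-- An object is indecomposable if it is nonzero and any biproduct decomposition is
trivial. -/
def IsIndecomposable (X : C) : Prop :=
  ¬ IsZero X ∧ ∀ (A B : C), (X ≅ A ⊞ B) → IsZero A ∨ IsZero B

/-- The cardinality of the set of isomorphism classes of indecomposable objects in `T`. -/
noncomputable def numIndec (T : Set C) : Cardinal :=
  Cardinal.mk
    (Quot fun (X Y : {X : C // X ∈ T ∧ IsIndecomposable X}) => Nonempty ((X : C) ≅ (Y : C)))

end Additive

section AddOf

variable {C : Type u} [Category.{v} C] [Preadditive C] [HasFiniteBiproducts C]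

/-- The additive closure of a class of objects : direct summands of finite direct
sums of its objects. -/
def addOf (X : Set C) : Set C :=
  {Y | ∃ (n : ℕ) (f : Fin n → C), (∀ j, f j ∈ X) ∧
    ∃ (i : Y ⟶ ⨁ f) (r : (⨁ f) ⟶ Y), i ≫ r = 𝟙 Y}

/-- A Krull-Schmidt category: every object is a finite direct sum of objects with
local endomorphism ring. -/
def IsKrullSchmidt (C : Type u) [Category.{v} C] [Preadditive C] [HasFiniteBiproducts C] : Prop :=
  ∀ X : C, ∃ (n : ℕ) (f : Fin n → C), (∀ j, IsLocalRing (End (f j))) ∧ Nonempty (X ≅ ⨁ f)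

end AddOf

namespace ConflationStruct

variable {C : Type u} [Category.{v} C] [Preadditive C] (S : ConflationStruct C)

section TauTilt

/-- The existence of an exact sequence `P → T⁰ ↠ T¹` with `T⁰, T¹ ∈ T` whose first
map is a left `T`-approximation; the exact sequence is encoded by the factorization
of the first map as a deflation onto its image followed by an inflation which is a
kernel of the deflation `T⁰ ↠ T¹`. -/
def ApproxSeq (T : Set C) (P : C) : Prop :=
  ∃ (K T0 T1 : C) (d : P ⟶ K) (i : K ⟶ T0) (g : T0 ⟶ T1),
    T1 ∈ T ∧ S.IsDeflation d ∧ S.IsConflation i g ∧ LeftApprox T (d ≫ i)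

variable [HasZeroObject C] [HasBinaryBiproducts C]

/-- A τ-rigid subcategory: additively closed with `Ext¹(T, Fac T) = 0`. -/
def IsTauRigid (T : Set C) : Prop :=
  AdditivelyClosed T ∧ ∀ T' ∈ T, ∀ X ∈ S.Fac T, S.ext1Zero T' X

/-- A support τ-tilting subcategory. -/
def IsSupportTauTilting (T : Set C) : Prop :=
  S.IsTauRigid T ∧ ∀ P ∈ S.projClass, S.ApproxSeq T P

/-- Condition (A): every projective admits an admissible left `T`-approximation. -/
def CondA (T : Set C) : Prop :=
  ∀ P ∈ S.projClass, ∃ (T' : C) (f : P ⟶ T'), LeftApprox T f ∧ S.IsAdmissible f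

end TauTilt

section Relative

/-- `g` is a deflation of the full exact subcategory supported on `D` (i.e. it is part
of a conflation all of whose terms belong to `D`; the source and target are recorded
separately where needed). -/
def DeflationIn (D : Set C) {Y Z : C} (g : Y ⟶ Z) : Prop :=
  ∃ (X : C) (f : X ⟶ Y), X ∈ D ∧ S.IsConflation f g

/-- `P` is a projective object of the full exact subcategory supported on `D`. -/
def IsProjRel (D : Set C) (P : C) : Prop :=
  P ∈ D ∧ ∀ ⦃Y Z : C⦄ (g : Y ⟶ Z), Y ∈ D → Z ∈ D → S.DeflationIn D g →
    ∀ u : P ⟶ Z, ∃ v : P ⟶ Y, v ≫ g = u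

/-- `Ext¹(X,Y) = 0` computed in the full exact subcategory supported on `D`. -/
def ext1ZeroRel (D : Set C) (X Y : C) : Prop :=
  ∀ (E : C) (f : Y ⟶ E) (g : E ⟶ X), E ∈ D → S.IsConflation f g →
    ∃ s : X ⟶ E, s ≫ g = 𝟙 X

/-- `extSuccZeroRel S D n X Y` says `Ext^{n+1}(X, Y) = 0` in the full exact subcategory
supported on `D`, via dimension shifting along syzygies. -/
def extSuccZeroRel (D : Set C) : ℕ → C → C → Prop
  | 0 => fun X Y => S.ext1ZeroRel D X Y
  | (n+1) => fun X Y => ∀ (K P : C) (i : K ⟶ P) (p : P ⟶ X),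
      K ∈ D → S.IsProjRel D P → S.IsConflation i p → extSuccZeroRel D n K Y

/-- `Ext^{n+1}(X,Y) = 0` in the ambient exact category. -/
def extSuccZero (n : ℕ) (X Y : C) : Prop := S.extSuccZeroRel Set.univ n X Y

end Relative

section Tilting

variable [HasZeroObject C] [HasBinaryBiproducts C]

/-- A (1-)tilting subcategory of the ambient exact category (with enough projectives):
additively closed, self-orthogonal for all `Ext^i`, `i ≥ 1`, of projective dimension at
most one, and every projective admits a conflation `P ↣ T⁰ ↠ T¹` with `T⁰, T¹ ∈ T`. -/
def IsTilting (T : Set C) : Prop :=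
  AdditivelyClosed T ∧
  (∀ T1 ∈ T, ∀ T2 ∈ T, ∀ n : ℕ, S.extSuccZero n T1 T2) ∧
  (∀ T' ∈ T, ∀ Y : C, S.extSuccZero 1 T' Y) ∧
  (∀ P ∈ S.projClass, ∃ (T0 T1 : C) (f : P ⟶ T0) (g : T0 ⟶ T1),
    T0 ∈ T ∧ T1 ∈ T ∧ S.IsConflation f g)

/-- A tilting subcategory of the full exact subcategory supported on `D` (whose
projectives are the relative projectives). -/
def IsTiltingRel (D T : Set C) : Prop :=
  AdditivelyClosed T ∧ T ⊆ D ∧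
  (∀ T1 ∈ T, ∀ T2 ∈ T, ∀ n : ℕ, S.extSuccZeroRel D n T1 T2) ∧
  (∀ T' ∈ T, ∀ Y ∈ D, S.extSuccZeroRel D 1 T' Y) ∧
  (∀ P : C, S.IsProjRel D P → ∃ (T0 T1 : C) (f : P ⟶ T0) (g : T0 ⟶ T1),
    T0 ∈ T ∧ T1 ∈ T ∧ S.IsConflation f g)

end Tilting

section Pairs

/-- `⊥₁ D`. -/
def perp1 (D : Set C) : Set C := {X | ∀ Y ∈ D, S.ext1Zero X Y}

/-- `T^⊥₀`. -/
def perp0 (T : Set C) : Set C := {Y | ∀ T' ∈ T, ∀ f : T' ⟶ Y, f = 0}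

/-- A torsion class: closed under factor objects and extensions. -/
def IsTorsionClass (D : Set C) : Prop :=
  (∀ {X Y : C} (g : X ⟶ Y), X ∈ D → S.IsDeflation g → Y ∈ D) ∧
  (∀ {X Y Z : C} {f : X ⟶ Y} {g : Y ⟶ Z}, S.IsConflation f g → X ∈ D → Z ∈ D → Y ∈ D)

/-- A torsion pair `(D, F)`. -/
def IsTorsionPair (D F : Set C) : Prop :=
  (∀ X ∈ D, ∀ Y ∈ F, ∀ f : X ⟶ Y, f = 0) ∧
  (∀ X : C, ∃ (D0 F0 : C) (i : D0 ⟶ X) (p : X ⟶ F0), D0 ∈ D ∧ F0 ∈ F ∧ S.IsConflation i p)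

/-- A τ-cotorsion pair `(Cc, D)`. -/
def IsTauCotorsionPair (Cc D : Set C) : Prop :=
  Cc = S.perp1 D ∧
  ∀ P ∈ S.projClass, ∃ (K D0 C0 : C) (d : P ⟶ K) (i : K ⟶ D0) (g : D0 ⟶ C0),
    D0 ∈ Cc ∧ D0 ∈ D ∧ C0 ∈ Cc ∧ S.IsDeflation d ∧ S.IsConflation i g ∧
    LeftApprox D (d ≫ i)

/-- A (complete) cotorsion pair `(Cc, D)`. -/
def IsCotorsionPair (Cc D : Set C) : Prop :=
  SummandClosed Cc ∧ SummandClosed D ∧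
  (∀ X ∈ Cc, ∀ Y ∈ D, S.ext1Zero X Y) ∧
  (∀ X : C, ∃ (D0 C0 : C) (f : D0 ⟶ C0) (g : C0 ⟶ X),
    D0 ∈ D ∧ C0 ∈ Cc ∧ S.IsConflation f g) ∧
  (∀ X : C, ∃ (D1 C1 : C) (f : X ⟶ D1) (g : D1 ⟶ C1),
    D1 ∈ D ∧ C1 ∈ Cc ∧ S.IsConflation f g)

/-- Admissibly contravariantly finite subcategory. -/
def IsACF (T : Set C) : Prop :=
  ∀ X : C, ∃ (T' : C) (f : T' ⟶ X), RightApprox T f ∧ S.IsAdmissible f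

end Pairs

end ConflationStruct

/-- A weakly idempotent complete additive category: every section has a cokernel. -/
def WeaklyIdempotentComplete (C : Type u) [Category.{v} C] [Preadditive C] : Prop :=
  ∀ {X Y : C} (s : X ⟶ Y), (∃ r : Y ⟶ X, s ≫ r = 𝟙 X) → HasCokernel s


namespace ConflationStruct

variable {C : Type u} [Category.{v} C] [Preadditive C] (S : ConflationStruct C)

section ET

/-- Membership in the ideal `I` of the category of projectives: morphisms `f`
between projectives with `Hom(f, T') = 0` for all `T' ∈ T`. -/
def memIdeal (T : Set C) {Q Q' : C} (f : Q ⟶ Q') : Prop :=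
  S.IsProjObj Q ∧ S.IsProjObj Q' ∧ ∀ T' ∈ T, ∀ g : Q' ⟶ T', f ≫ g = 0

/-- `A_T`: the objects killed by the ideal `I`. -/
def AT (T : Set C) : Set C :=
  {X | ∀ ⦃Q Q' : C⦄ (f : Q ⟶ Q'), S.memIdeal T f → ∀ h : Q' ⟶ X, f ≫ h = 0}

/-- The conflation structure induced on a full subcategory: conflations of the
ambient category all of whose terms lie in the subcategory. -/
def structOn (D : Set C) : ConflationStruct (ObjectProperty.FullSubcategory (fun X : C => X ∈ D)) :=
  ⟨fun _ _ _ f g => S.IsConflation f.hom g.hom⟩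

variable [HasFiniteBiproducts C]

/-- `P_T`: additive closure of the images of admissible left `T`-approximations of
projectives. -/
def PTset (T : Set C) : Set C :=
  addOf {K | ∃ (Q T0 : C) (d : Q ⟶ K) (i : K ⟶ T0),
    S.IsProjObj Q ∧ S.IsDeflation d ∧ S.IsInflation i ∧ LeftApprox T (d ≫ i)}

end ET

section NTilting

/-- `T^⊥ = {Y | Ext^i(T', Y) = 0  for all i ≥ 1, T' ∈ T}`. -/
def rperp (T : Set C) : Set C :=
  {Y | ∀ T' ∈ T, ∀ n : ℕ, S.extSuccZero n T' Y}

/-- `Cores S D n X` : `X` admits an exact sequence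
`X ↣ Y₀ → ⋯ → Y_{n-1} ↠ Y_n` with all `Yᵢ ∈ D`. -/
def Cores (D : Set C) : ℕ → C → Prop
  | 0 => fun X => X ∈ D
  | (n+1) => fun X => ∃ (Y K : C) (i : X ⟶ Y) (p : Y ⟶ K),
      Y ∈ D ∧ S.IsConflation i p ∧ Cores D n K

/-- An `n`-tilting subcategory in the sense of Sauter: `T^⊥` has enough projectives
given by `T`, and every object has a `T^⊥`-coresolution of length `n`. -/
def IsNTilting (T : Set C) (n : ℕ) : Prop :=
  T ⊆ S.rperp T ∧
  (∀ T' ∈ T, ∀ Y ∈ S.rperp T, S.ext1Zero T' Y) ∧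
  (∀ Y ∈ S.rperp T, ∃ (K T' : C) (i : K ⟶ T') (p : T' ⟶ Y),
    T' ∈ T ∧ K ∈ S.rperp T ∧ S.IsConflation i p) ∧
  (∀ X : C, S.Cores (S.rperp T) n X)

/-- `P^{<∞}`: objects of finite projective dimension. -/
def Pfin : Set C := {X | ∃ n : ℕ, ∀ Y : C, S.extSuccZero n X Y}

end NTilting

section TauObj

variable [HasZeroObject C] [HasBinaryBiproducts C]

/-- Variant of `ApproxSeq` where the left approximation is required to be nonzero. -/
def ApproxSeqNonzero (T : Set C) (P : C) : Prop :=
  ∃ (K T0 T1 : C) (d : P ⟶ K) (i : K ⟶ T0) (g : T0 ⟶ T1),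
    T1 ∈ T ∧ S.IsDeflation d ∧ S.IsConflation i g ∧ LeftApprox T (d ≫ i) ∧ d ≫ i ≠ 0

/-- A τ-tilting subcategory: support τ-tilting such that every nonzero projective
admits a nonzero such approximation sequence. -/
def IsTauTiltingSubcat (T : Set C) : Prop :=
  S.IsSupportTauTilting T ∧ ∀ P ∈ S.projClass, ¬ IsZero P → S.ApproxSeqNonzero T P

end TauObj

end ConflationStruct

section K0

variable {C : Type u} [Category.{v} C] [Preadditive C]

/-- Relations for the Grothendieck group of an exact subcategory: conflation
relations together with isomorphism relations. -/
def K0ExRels (S : ConflationStruct C) (D : Set C) :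
    Set (FreeAbelianGroup {X : C // X ∈ D}) :=
  {x | (∃ (A B E : {X : C // X ∈ D}) (f : (A : C) ⟶ (B : C)) (g : (B : C) ⟶ (E : C)),
          S.IsConflation f g ∧
          x = FreeAbelianGroup.of B - FreeAbelianGroup.of A - FreeAbelianGroup.of E) ∨
       (∃ (A B : {X : C // X ∈ D}), Nonempty ((A : C) ≅ (B : C)) ∧
          x = FreeAbelianGroup.of A - FreeAbelianGroup.of B)}

/-- The Grothendieck group of the full exact subcategory supported on `D`. -/
def K0Ex (S : ConflationStruct C) (D : Set C) :=
  FreeAbelianGroup {X : C // X ∈ D} ⧸ AddSubgroup.closure (K0ExRels S D)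

noncomputable instance (S : ConflationStruct C) (D : Set C) : AddCommGroup (K0Ex S D) :=
  QuotientAddGroup.Quotient.addCommGroup _

variable [HasBinaryBiproducts C]

/-- Relations for the split Grothendieck group of an additive subcategory. -/
def K0SplitRels (T : Set C) : Set (FreeAbelianGroup {X : C // X ∈ T}) :=
  {x | (∃ (A B E : {X : C // X ∈ T}), Nonempty ((E : C) ≅ (A : C) ⊞ (B : C)) ∧
          x = FreeAbelianGroup.of E - FreeAbelianGroup.of A - FreeAbelianGroup.of B) ∨
       (∃ (A B : {X : C // X ∈ T}), Nonempty ((A : C) ≅ (B : C)) ∧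
          x = FreeAbelianGroup.of A - FreeAbelianGroup.of B)}

/-- The split Grothendieck group of the additive subcategory supported on `T`. -/
def K0Split (T : Set C) :=
  FreeAbelianGroup {X : C // X ∈ T} ⧸ AddSubgroup.closure (K0SplitRels T)

noncomputable instance (T : Set C) : AddCommGroup (K0Split T) :=
  QuotientAddGroup.Quotient.addCommGroup _

end K0

end TauTilting

namespace TauTilting

section Preadditive

variable {C : Type u} [Category.{v} C] [Preadditive C]

lemma exists_retract_of_retract_biproduct {J : Type} [Fintype J] {Y : C} [IsLocalRing (End Y)]
    {N : J → C} [HasBiproduct N] (h : Retract Y (⨁ N)) : ∃ j, Nonempty (Retract Y (N j)) := by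
  let u (j : J) : End Y := h.i ≫ biproduct.π N j ≫ biproduct.ι N j ≫ h.r
  have hsum : ∑ j, u j = 1 := by
    have h1 : h.i ≫ (∑ j, biproduct.π N j ≫ biproduct.ι N j) ≫ h.r = 𝟙 Y := by
      rw [biproduct.total, Category.id_comp, h.retract]
    show ∑ j, h.i ≫ biproduct.π N j ≫ biproduct.ι N j ≫ h.r = 𝟙 Y
    simpa only [Preadditive.comp_sum, Preadditive.sum_comp, Category.assoc] using h1
  obtain ⟨j, -, hj⟩ := IsLocalRing.exists_of_isUnit_sum (hsum ▸ isUnit_one)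
  have := (isUnit_iff_isIso _).1 hj
  exact ⟨j, ⟨⟨h.i ≫ biproduct.π N j, biproduct.ι N j ≫ h.r ≫ inv (u j),
    by simpa only [u, Category.assoc] using IsIso.hom_inv_id (u j)⟩⟩⟩

lemma nonempty_iso_of_retract {Y N : C} [Nontrivial (End Y)] (h : Retract Y N)
    (hN : ∀ e : N ⟶ N, e ≫ e = e → e = 0 ∨ e = 𝟙 N) : Nonempty (Y ≅ N) := by
  rcases hN (h.r ≫ h.i) (by simp) with he | he
  · refine absurd ?_ (one_ne_zero (α := End Y))
    calc (1 : End Y) = h.i ≫ (h.r ≫ h.i) ≫ h.r := by simp [End.one_def]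
      _ = 0 := by rw [he]; simp
  · exact ⟨{ hom := h.i, inv := h.r, inv_hom_id := he }⟩

lemma mem_addOf_of_mem [HasFiniteBiproducts C] {X : Set C} {Y : C} (hY : Y ∈ X) : Y ∈ addOf X :=
  ⟨1, fun _ => Y, fun _ => hY, biproduct.ι (fun _ => Y) 0, biproduct.π _ 0, by simp⟩

end Preadditive

namespace ConflationStruct

variable {C : Type u} [Category.{v} C] [Preadditive C] {S : ConflationStruct C}

namespace IsExactStructure

variable {X Y Z : C} {f : X ⟶ Y} {g : Y ⟶ Z}

lemma comp_eq_zero (hS : S.IsExactStructure) (h : S.IsConflation f g) : f ≫ g = 0 :=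
  (hS.ker_coker h).1

lemma exists_lift (hS : S.IsExactStructure) (h : S.IsConflation f g) {W : C} (t : W ⟶ Y)
    (ht : t ≫ g = 0) : ∃ l : W ⟶ X, l ≫ f = t := by
  obtain ⟨w, ⟨hk⟩, -⟩ := hS.ker_coker h
  obtain ⟨l, hl⟩ := KernelFork.IsLimit.lift' hk t ht
  exact ⟨l, hl⟩

lemma mono_of_isInflation (hS : S.IsExactStructure) (h : S.IsInflation f) : Mono f := by
  obtain ⟨_, _, hc⟩ := h
  obtain ⟨w, ⟨hk⟩, -⟩ := hS.ker_coker hc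
  exact mono_of_isLimit_fork hk

lemma epi_of_isDeflation (hS : S.IsExactStructure) (h : S.IsDeflation g) : Epi g := by
  obtain ⟨_, _, hc⟩ := h
  obtain ⟨w, -, ⟨hc⟩⟩ := hS.ker_coker hc
  exact epi_of_isColimit_cofork hc

end IsExactStructure

lemma IsProjObj.of_retract {P P' : C} (h : Retract P P') (hP' : S.IsProjObj P') :
    S.IsProjObj P := by
  intro Y Z g hg u
  obtain ⟨v, hv⟩ := hP' g hg (h.r ≫ u)
  exact ⟨h.i ≫ v, by rw [Category.assoc, hv, Retract.retract_assoc]⟩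

lemma isProjObj_biproduct {J : Type*} (W : J → C) [HasBiproduct W]
    (hW : ∀ j, S.IsProjObj (W j)) : S.IsProjObj (⨁ W) := by
  intro Y Z g hg u
  choose v hv using fun j => hW j g hg (biproduct.ι W j ≫ u)
  exact ⟨biproduct.desc v, biproduct.hom_ext' _ _ fun j => by simp [hv]⟩

end ConflationStruct

open ConflationStruct

section LeftApprox

variable {C : Type u} [Category.{v} C] [Preadditive C] {S : ConflationStruct C} {T : Set C}

lemma exists_comp_eq_of_leftApprox (hS : S.IsExactStructure) {Q Q' K K' T₀ T₀' : C}
    {d : Q ⟶ K} {i : K ⟶ T₀} {i' : K' ⟶ T₀'} [Epi d] (hf : LeftApprox T (d ≫ i))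
    (hT₀' : T₀' ∈ T) (hi' : S.IsInflation i') (d' : Q' ⟶ K') (a : Q ⟶ Q') :
    ∃ b : K ⟶ K', d ≫ b = a ≫ d' := by
  obtain ⟨v, hv⟩ := hf.2 T₀' hT₀' (a ≫ d' ≫ i')
  obtain ⟨_, g', hc'⟩ := hi'
  have := hS.mono_of_isInflation ⟨_, _, hc'⟩
  obtain ⟨b, hb⟩ := hS.exists_lift hc' (i ≫ v) <| by
    rw [← cancel_epi d, ← Category.assoc, ← Category.assoc, hv]
    simp [hS.comp_eq_zero hc']
  refine ⟨b, ?_⟩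
  rw [← cancel_mono i', Category.assoc, hb, ← Category.assoc, hv, Category.assoc]

lemma nonempty_iso_of_leftApprox (hS : S.IsExactStructure) {Q K K' T₀ T₀' : C}
    {d : Q ⟶ K} {i : K ⟶ T₀} {d' : Q ⟶ K'} {i' : K' ⟶ T₀'}
    (hd : S.IsDeflation d) (hi : S.IsInflation i) (hf : LeftApprox T (d ≫ i))
    (hd' : S.IsDeflation d') (hi' : S.IsInflation i') (hf' : LeftApprox T (d' ≫ i')) :
    Nonempty (K ≅ K') := by
  have := hS.epi_of_isDeflation hd
  have := hS.epi_of_isDeflation hd'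
  obtain ⟨φ, hφ⟩ := exists_comp_eq_of_leftApprox hS hf hf'.1 hi' d' (𝟙 Q)
  obtain ⟨ψ, hψ⟩ := exists_comp_eq_of_leftApprox hS hf' hf.1 hi d (𝟙 Q)
  refine ⟨⟨φ, ψ, ?_, ?_⟩⟩
  · rw [← cancel_epi d, reassoc_of% hφ]; simp [hψ]
  · rw [← cancel_epi d', reassoc_of% hψ]; simp [hφ]

end LeftApprox

/-- `K Q` is the image `ρ(Q)` of a left `T`-approximation `d Q ≫ i Q` of the projective `Q`. -/
structure LeftApproxImages {C : Type u} [Category.{v} C] [Preadditive C]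
    (S : ConflationStruct C) (T : Set C) where
  K : {Q : C // S.IsProjObj Q} → C
  T₀ : {Q : C // S.IsProjObj Q} → C
  d : ∀ Q : {Q : C // S.IsProjObj Q}, (Q : C) ⟶ K Q
  i : ∀ Q : {Q : C // S.IsProjObj Q}, K Q ⟶ T₀ Q
  isDeflation_d : ∀ Q, S.IsDeflation (d Q)
  isInflation_i : ∀ Q, S.IsInflation (i Q)
  leftApprox : ∀ Q, LeftApprox T (d Q ≫ i Q)

namespace LeftApproxImages

variable {C : Type u} [Category.{v} C] [Preadditive C] {S : ConflationStruct C} {T : Set C}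
  (A : LeftApproxImages S T) {Q Q' Q'' : {Q : C // S.IsProjObj Q}}

lemma epi_d (hS : S.IsExactStructure) (Q : {Q : C // S.IsProjObj Q}) : Epi (A.d Q) :=
  hS.epi_of_isDeflation (A.isDeflation_d Q)

lemma exists_d_comp_eq (hS : S.IsExactStructure) (a : (Q : C) ⟶ Q') :
    ∃ b : A.K Q ⟶ A.K Q', A.d Q ≫ b = a ≫ A.d Q' :=
  have := A.epi_d hS Q
  exists_comp_eq_of_leftApprox hS (A.leftApprox Q) (A.leftApprox Q').1 (A.isInflation_i Q')
    (A.d Q') a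

noncomputable def map (hS : S.IsExactStructure) (a : (Q : C) ⟶ Q') : A.K Q ⟶ A.K Q' :=
  (A.exists_d_comp_eq hS a).choose

lemma d_comp_map (hS : S.IsExactStructure) (a : (Q : C) ⟶ Q') :
    A.d Q ≫ A.map hS a = a ≫ A.d Q' :=
  (A.exists_d_comp_eq hS a).choose_spec

lemma d_comp_map_assoc (hS : S.IsExactStructure) (a : (Q : C) ⟶ Q') {Z : C} (h : A.K Q' ⟶ Z) :
    A.d Q ≫ A.map hS a ≫ h = a ≫ A.d Q' ≫ h := by
  rw [← Category.assoc, d_comp_map, Category.assoc]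

lemma map_eq_iff (hS : S.IsExactStructure) {a : (Q : C) ⟶ Q'} {b : A.K Q ⟶ A.K Q'} :
    A.map hS a = b ↔ A.d Q ≫ b = a ≫ A.d Q' := by
  have := A.epi_d hS Q
  rw [← cancel_epi (A.d Q), d_comp_map]
  exact eq_comm

lemma map_id (hS : S.IsExactStructure) : A.map hS (𝟙 (Q : C)) = 𝟙 (A.K Q) :=
  (A.map_eq_iff hS).2 (by simp)

lemma map_comp (hS : S.IsExactStructure) (a : (Q : C) ⟶ Q') (b : (Q' : C) ⟶ Q'') :
    A.map hS (a ≫ b) = A.map hS a ≫ A.map hS b :=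
  (A.map_eq_iff hS).2 (by simp [d_comp_map_assoc, d_comp_map])

lemma map_zero (hS : S.IsExactStructure) : A.map hS (0 : (Q : C) ⟶ Q') = 0 :=
  (A.map_eq_iff hS).2 (by simp)

lemma map_add (hS : S.IsExactStructure) (a b : (Q : C) ⟶ Q') :
    A.map hS (a + b) = A.map hS a + A.map hS b :=
  (A.map_eq_iff hS).2 (by simp [d_comp_map])

lemma map_sub (hS : S.IsExactStructure) (a b : (Q : C) ⟶ Q') :
    A.map hS (a - b) = A.map hS a - A.map hS b :=
  (A.map_eq_iff hS).2 (by simp [d_comp_map])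

lemma map_eq_zero_iff (hS : S.IsExactStructure) (a : (Q : C) ⟶ Q') :
    A.map hS a = 0 ↔ ∀ T' ∈ T, ∀ u : (Q' : C) ⟶ T', a ≫ u = 0 := by
  have := hS.mono_of_isInflation (A.isInflation_i Q')
  rw [map_eq_iff, comp_zero, eq_comm, ← cancel_mono (A.i Q'), Category.assoc, zero_comp]
  refine ⟨fun h T' hT' u => ?_, fun h => h _ (A.leftApprox Q').1 _⟩
  obtain ⟨w, rfl⟩ := (A.leftApprox Q').2 T' hT' u
  rw [Category.assoc, reassoc_of% h, zero_comp]

lemma map_surjective (hS : S.IsExactStructure) :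
    Function.Surjective (A.map hS : ((Q : C) ⟶ Q') → (A.K Q ⟶ A.K Q')) :=
  fun b => (Q.2 _ (A.isDeflation_d Q') (A.d Q ≫ b)).imp fun _ ha => (A.map_eq_iff hS).2 ha.symm

noncomputable def mapIso (hS : S.IsExactStructure) (e : (Q : C) ≅ Q') : A.K Q ≅ A.K Q' where
  hom := A.map hS e.hom
  inv := A.map hS e.inv
  hom_inv_id := by rw [← map_comp, e.hom_inv_id, map_id]
  inv_hom_id := by rw [← map_comp, e.inv_hom_id, map_id]

lemma isIso_map (hS : S.IsExactStructure) (a : (Q : C) ⟶ Q') [IsIso a] : IsIso (A.map hS a) :=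
  (A.mapIso hS (asIso a)).isIso_hom

lemma eq_zero_or_eq_id_of_idempotent (hS : S.IsExactStructure) [IsLocalRing (End (Q : C))]
    {e : A.K Q ⟶ A.K Q} (he : e ≫ e = e) : e = 0 ∨ e = 𝟙 _ := by
  obtain ⟨x, rfl⟩ := A.map_surjective hS e
  rcases IsLocalRing.isUnit_or_isUnit_of_add_one (add_sub_cancel (End.of x) 1) with hx | hx
  · have := (isUnit_iff_isIso _).1 hx
    have := A.isIso_map hS x
    exact Or.inr ((cancel_mono (A.map hS x)).1 (by rw [he, Category.id_comp]))
  · have : IsIso (𝟙 (Q : C) - x) := (isUnit_iff_isIso _).1 hx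
    have := A.isIso_map hS (𝟙 (Q : C) - x)
    refine Or.inl ((cancel_mono (A.map hS (𝟙 (Q : C) - x))).1 ?_)
    rw [map_sub, map_id, Preadditive.comp_sub, he, Category.comp_id, sub_self, zero_comp]

section Biproducts

variable [HasFiniteBiproducts C]

noncomputable def biproductIso (hS : S.IsExactStructure) {J : Type} [Fintype J]
    (W : J → {Q : C // S.IsProjObj Q}) :
    A.K ⟨⨁ fun j => (W j : C), isProjObj_biproduct _ fun j => (W j).2⟩ ≅
      ⨁ fun j => A.K (W j) where
  hom := biproduct.lift fun j => A.map hS (biproduct.π (fun j => (W j : C)) j)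
  inv := biproduct.desc fun j => A.map hS (biproduct.ι (fun j => (W j : C)) j)
  hom_inv_id := by
    rw [biproduct.lift_desc, ← A.map_id hS, eq_comm, map_eq_iff]
    simp only [Preadditive.comp_sum, d_comp_map_assoc, d_comp_map]
    simp only [← Category.assoc, ← Preadditive.sum_comp, biproduct.total]
  inv_hom_id := by
    refine biproduct.hom_ext' _ _ fun j => biproduct.hom_ext _ _ fun k => ?_
    simp only [biproduct.ι_desc_assoc, Category.assoc, biproduct.lift_π, ← map_comp,
      Category.id_comp]
    by_cases hjk : j = k
    · subst hjk
      simp only [biproduct.ι_π_self, map_id]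
    · simp only [biproduct.ι_π_ne _ hjk, map_zero]

lemma mem_PTset (Q : {Q : C // S.IsProjObj Q}) : A.K Q ∈ S.PTset T :=
  mem_addOf_of_mem ⟨Q, A.T₀ Q, A.d Q, A.i Q, Q.2, A.isDeflation_d Q, A.isInflation_i Q,
    A.leftApprox Q⟩

lemma exists_retract_of_mem_PTset (hS : S.IsExactStructure) {X : C} (hX : X ∈ S.PTset T) :
    ∃ Q : {Q : C // S.IsProjObj Q}, Nonempty (Retract X (A.K Q)) := by
  obtain ⟨n, κ, hκ, s, r, hsr⟩ := hX
  choose Q T₀ d i hQ hd hi hf using hκ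
  let W (j : Fin n) : {Q : C // S.IsProjObj Q} := ⟨Q j, hQ j⟩
  have e (j : Fin n) : Nonempty (κ j ≅ A.K (W j)) :=
    nonempty_iso_of_leftApprox hS (hd j) (hi j) (hf j) (A.isDeflation_d _) (A.isInflation_i _)
      (A.leftApprox _)
  exact ⟨_, ⟨(⟨s, r, hsr⟩ : Retract X (⨁ κ)).trans
    (.ofIso (biproduct.mapIso (fun j => (e j).some) ≪≫ (A.biproductIso hS W).symm))⟩⟩

lemma exists_retract_biproduct_of_isLocalRing (hS : S.IsExactStructure)
    (hKS : IsKrullSchmidt C) {X : C} {Q : {Q : C // S.IsProjObj Q}} (h : Retract X (A.K Q)) :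
    ∃ (n : ℕ) (Z : Fin n → {Q : C // S.IsProjObj Q}), (∀ l, IsLocalRing (End (Z l : C))) ∧
      Nonempty (Retract X (⨁ fun l => A.K (Z l))) := by
  obtain ⟨n, Z, hZ, ⟨e⟩⟩ := hKS Q
  let Z' (l : Fin n) : {Q : C // S.IsProjObj Q} :=
    ⟨Z l, Q.2.of_retract (((biproduct.bicone Z).retract l).trans (.ofIso e.symm))⟩
  let e' : A.K Q ≅ A.K ⟨_, isProjObj_biproduct _ fun l => (Z' l).2⟩ := A.mapIso hS e
  exact ⟨n, Z', hZ, ⟨h.trans (.ofIso (e' ≪≫ A.biproductIso hS Z'))⟩⟩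

lemma exists_iso_of_mem_PTset (hS : S.IsExactStructure) (hKS : IsKrullSchmidt C) {X : C}
    (hX : X ∈ S.PTset T) :
    ∃ Q : {Q : C // S.IsProjObj Q}, Nonempty (A.K Q ≅ X) := by
  obtain ⟨Q, ⟨hXQ⟩⟩ := A.exists_retract_of_mem_PTset hS hX
  obtain ⟨n, Z, hZ, ⟨hXZ⟩⟩ := A.exists_retract_biproduct_of_isLocalRing hS hKS hXQ
  obtain ⟨m, Y, hY, ⟨e⟩⟩ := hKS X
  have hYZ (k : Fin m) : ∃ l, Nonempty (Y k ≅ A.K (Z l)) := by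
    have := hY k
    obtain ⟨l, ⟨h⟩⟩ := exists_retract_of_retract_biproduct
      (((biproduct.bicone Y).retract k).trans ((Retract.ofIso e.symm).trans hXZ))
    have := hZ l
    exact ⟨l, nonempty_iso_of_retract h fun _ => A.eq_zero_or_eq_id_of_idempotent hS⟩
  choose σ hσ using hYZ
  exact ⟨_, ⟨A.biproductIso hS (Z ∘ σ) ≪≫
    biproduct.mapIso (fun k => (hσ k).some.symm) ≪≫ e.symm⟩⟩

end Biproducts

end LeftApproxImages

theorem rho_welldefined_equivalence_general
    {C : Type u} [Category.{v} C] [Preadditive C]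
    [HasFiniteBiproducts C]
    (S : ConflationStruct C) (hS : S.IsExactStructure)
    (hKS : IsKrullSchmidt C)
    (T : Set C)
    (K T0 T1 : {Q : C // S.IsProjObj Q} → C)
    (d : ∀ Q : {Q : C // S.IsProjObj Q}, (Q : C) ⟶ K Q)
    (i : ∀ Q : {Q : C // S.IsProjObj Q}, K Q ⟶ T0 Q)
    (g : ∀ Q : {Q : C // S.IsProjObj Q}, T0 Q ⟶ T1 Q)
    (hdata : ∀ Q : {Q : C // S.IsProjObj Q},
      T1 Q ∈ T ∧ S.IsDeflation (d Q) ∧ S.IsConflation (i Q) (g Q) ∧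
      LeftApprox T (d Q ≫ i Q) ∧
      (∀ h : T0 Q ⟶ T0 Q, (d Q ≫ i Q) ≫ h = d Q ≫ i Q → IsIso h)) :
    ∃ ρm : ∀ (Q Q' : {Q : C // S.IsProjObj Q}), ((Q : C) ⟶ (Q' : C)) → (K Q ⟶ K Q'),
      (∀ (Q Q' : {Q : C // S.IsProjObj Q}) (a : (Q : C) ⟶ (Q' : C)),
        d Q ≫ ρm Q Q' a = a ≫ d Q') ∧
      (∀ Q : {Q : C // S.IsProjObj Q}, ρm Q Q (𝟙 (Q : C)) = 𝟙 (K Q)) ∧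
      (∀ (Q Q' Q'' : {Q : C // S.IsProjObj Q}) (a : (Q : C) ⟶ (Q' : C))
          (b : (Q' : C) ⟶ (Q'' : C)), ρm Q Q'' (a ≫ b) = ρm Q Q' a ≫ ρm Q' Q'' b) ∧
      (∀ (Q Q' : {Q : C // S.IsProjObj Q}) (a b : (Q : C) ⟶ (Q' : C)),
        ρm Q Q' (a + b) = ρm Q Q' a + ρm Q Q' b) ∧
      (∀ (Q Q' : {Q : C // S.IsProjObj Q}) (a : (Q : C) ⟶ (Q' : C)),
        ρm Q Q' a = 0 ↔ ∀ T' ∈ T, ∀ u : (Q' : C) ⟶ T', a ≫ u = 0) ∧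
      (∀ Q : {Q : C // S.IsProjObj Q}, K Q ∈ S.PTset T) ∧
      (∀ (Q Q' : {Q : C // S.IsProjObj Q}) (b : K Q ⟶ K Q'),
        ∃ a : (Q : C) ⟶ (Q' : C), ρm Q Q' a = b) ∧
      (∀ X ∈ S.PTset T, ∃ Q : {Q : C // S.IsProjObj Q}, Nonempty (K Q ≅ X)) := by
  let A : LeftApproxImages S T :=
    { K, T₀ := T0, d, i
      isDeflation_d := fun Q => (hdata Q).2.1
      isInflation_i := fun Q => ⟨_, _, (hdata Q).2.2.1⟩
      leftApprox := fun Q => (hdata Q).2.2.2.1 }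
  exact ⟨fun _ _ => A.map hS, fun _ _ => A.d_comp_map hS, fun _ => A.map_id hS,
    fun _ _ _ => A.map_comp hS, fun _ _ => A.map_add hS, fun _ _ => A.map_eq_zero_iff hS,
    A.mem_PTset, fun _ _ => A.map_surjective hS, fun _ => A.exists_iso_of_mem_PTset hS hKS⟩

/-- given, for each projective `Q`, a fixed exact sequence
`Q →f T⁰ ↠ T¹` with `f` a minimal left `T`-approximation, the assignment
`ρ(Q) = Im f` with induced maps is a well-defined additive functor `P → P_T`
killing the ideal `I` and inducing an equivalence `P/I ≃ P_T`. -/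
theorem rho_welldefined_equivalence
    {C : Type u} [Category.{v} C] [Preadditive C] [HasZeroObject C] [HasBinaryBiproducts C]
    [HasFiniteBiproducts C]
    (S : ConflationStruct C) (hS : S.IsExactStructure) (hP : S.HasEnoughProjectives)
    (hKS : IsKrullSchmidt C)
    (T : Set C) (hrig : S.IsTauRigid T) (hA : S.CondA T)
    (K T0 T1 : {Q : C // S.IsProjObj Q} → C)
    (d : ∀ Q : {Q : C // S.IsProjObj Q}, (Q : C) ⟶ K Q)
    (i : ∀ Q : {Q : C // S.IsProjObj Q}, K Q ⟶ T0 Q)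
    (g : ∀ Q : {Q : C // S.IsProjObj Q}, T0 Q ⟶ T1 Q)
    (hdata : ∀ Q : {Q : C // S.IsProjObj Q},
      T1 Q ∈ T ∧ S.IsDeflation (d Q) ∧ S.IsConflation (i Q) (g Q) ∧
      LeftApprox T (d Q ≫ i Q) ∧
      (∀ h : T0 Q ⟶ T0 Q, (d Q ≫ i Q) ≫ h = d Q ≫ i Q → IsIso h)) :
    ∃ ρm : ∀ (Q Q' : {Q : C // S.IsProjObj Q}), ((Q : C) ⟶ (Q' : C)) → (K Q ⟶ K Q'),
      (∀ (Q Q' : {Q : C // S.IsProjObj Q}) (a : (Q : C) ⟶ (Q' : C)),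
        d Q ≫ ρm Q Q' a = a ≫ d Q') ∧
      (∀ Q : {Q : C // S.IsProjObj Q}, ρm Q Q (𝟙 (Q : C)) = 𝟙 (K Q)) ∧
      (∀ (Q Q' Q'' : {Q : C // S.IsProjObj Q}) (a : (Q : C) ⟶ (Q' : C))
          (b : (Q' : C) ⟶ (Q'' : C)), ρm Q Q'' (a ≫ b) = ρm Q Q' a ≫ ρm Q' Q'' b) ∧
      (∀ (Q Q' : {Q : C // S.IsProjObj Q}) (a b : (Q : C) ⟶ (Q' : C)),
        ρm Q Q' (a + b) = ρm Q Q' a + ρm Q Q' b) ∧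
      (∀ (Q Q' : {Q : C // S.IsProjObj Q}) (a : (Q : C) ⟶ (Q' : C)),
        ρm Q Q' a = 0 ↔ ∀ T' ∈ T, ∀ u : (Q' : C) ⟶ T', a ≫ u = 0) ∧
      (∀ Q : {Q : C // S.IsProjObj Q}, K Q ∈ S.PTset T) ∧
      (∀ (Q Q' : {Q : C // S.IsProjObj Q}) (b : K Q ⟶ K Q'),
        ∃ a : (Q : C) ⟶ (Q' : C), ρm Q Q' a = b) ∧
      (∀ X ∈ S.PTset T, ∃ Q : {Q : C // S.IsProjObj Q}, Nonempty (K Q ≅ X)) :=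
  rho_welldefined_equivalence_general S hS hKS T K T0 T1 d i g hdata

end TauTilting
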